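/- arXiv:1509.04335 — 3 statements merged into one kernel-verified Lean document; each statement's English description precedes it below -/
import Mathlib

section
/- Let X, Y be nonempty finite types and K₁, K₂ channels from X to Y. Suppose that for every pmf π on X, I(X; Y)_{s₁} ≥ I(X; Y)_{s₂}, where sₖ is the joint pmf on X × Y given by sₖ(x,y) = π x · Kₖ x y (i.e., the broadcast channel with components K₁, K₂ is more capable). Let 1 ≥ p₁ ≥ p₂ ≥ 0. Then for every pmf π on X, the mutual information I(X; Y × Bool) computed from the joint pmf (x,(y,s)) ↦ π x · N_{p₁} x (y,s) is greater than or equal to the one computed from (x,(y,s)) ↦ π x · N_{p₂} x (y,s). -/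
/-- A pmf on a finite type: nonnegative and summing to 1. -/
def IsPMF {A : Type*} [Fintype A] (w : A → ℝ) : Prop :=
  (∀ a, 0 ≤ w a) ∧ ∑ a, w a = 1

/-- Shannon entropy (natural logarithm) of a pmf on a finite type. -/
noncomputable def entropy {A : Type*} [Fintype A] (w : A → ℝ) : ℝ :=
  ∑ a, Real.negMulLog (w a)

/-- Mutual information of a joint pmf on a product of finite types. -/
noncomputable def mutualInfo {A B : Type*} [Fintype A] [Fintype B] (r : A × B → ℝ) : ℝ :=
  entropy (fun a => ∑ b, r (a, b)) + entropy (fun b => ∑ a, r (a, b)) - entropy r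

/-- A channel from `X` to `Y`: each row is a pmf on `Y`. -/
def IsChannel {X Y : Type*} [Fintype Y] (K : X → Y → ℝ) : Prop :=
  ∀ x, IsPMF (K x)

/-- The joint pmf on `U × Z` induced by a joint pmf on `U × X` and a channel from `X` to `Z`. -/
noncomputable def induced {U X Z : Type*} [Fintype X] (p : U × X → ℝ) (K : X → Z → ℝ) :
    U × Z → ℝ := fun uz => ∑ x, p (uz.1, x) * K x uz.2

/-- The state-augmented mixture channel `N_q`: the state selects channel `K₁` with
probability `q` and `K₂` with probability `1 - q`, independently of the input, and the
output is the pair (channel output, state). -/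
noncomputable def mixChannel {X Y : Type*} (q : ℝ) (K₁ K₂ : X → Y → ℝ) :
    X → Y × Bool → ℝ := fun x ys => if ys.2 then q * K₁ x ys.1 else (1 - q) * K₂ x ys.1

/-!
Revealing the state `S` splits the mixture into its components: since `S` is independent of
the input, `I(X; Ỹ_S, S) = q · I(X; Y)_{s₁} + (1 - q) · I(X; Y)_{s₂}` for every real `q`, the
binary entropy of `S` cancelling between the output and the joint entropy. The mutual
information is therefore affine in `q` with slope `I(X; Y)_{s₁} - I(X; Y)_{s₂} ≥ 0`.
-/

section StateMix

variable {A : Type*} [Fintype A]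

noncomputable def stateMix (q : ℝ) (f g : A → ℝ) : A × Bool → ℝ :=
  fun as => if as.2 then q * f as.1 else (1 - q) * g as.1

lemma sum_stateMix (q : ℝ) (f g : A → ℝ) :
    ∑ as, stateMix q f g as = q * ∑ a, f a + (1 - q) * ∑ a, g a := by
  simp [stateMix, Fintype.sum_prod_type, Finset.sum_add_distrib, Finset.mul_sum]

lemma entropy_stateMix (q : ℝ) {f g : A → ℝ} (hf : ∑ a, f a = 1) (hg : ∑ a, g a = 1) :
    entropy (stateMix q f g) = q * entropy f + (1 - q) * entropy g + Real.binEntropy q := by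
  have hsplit : ∀ a, ∑ s : Bool, Real.negMulLog (stateMix q f g (a, s)) =
      q * Real.negMulLog (f a) + (1 - q) * Real.negMulLog (g a)
        + (f a * Real.negMulLog q + g a * Real.negMulLog (1 - q)) := by
    intro a
    simp only [Fintype.sum_bool, stateMix, if_true, Bool.false_eq_true, if_false,
      Real.negMulLog_mul]
    ring
  simp only [entropy, Fintype.sum_prod_type, hsplit, Finset.sum_add_distrib, ← Finset.mul_sum,
    ← Finset.sum_mul, hf, hg, Real.binEntropy_eq_negMulLog_add_negMulLog_one_sub]
  ring

end StateMix

lemma entropy_comp_equiv {A B : Type*} [Fintype A] [Fintype B] (e : A ≃ B) (w : B → ℝ) :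
    entropy (w ∘ e) = entropy w :=
  Fintype.sum_equiv e _ _ fun _ => rfl

section Channel

variable {X Y : Type*}

def joint (π : X → ℝ) (K : X → Y → ℝ) : X × Y → ℝ := fun xy => π xy.1 * K xy.1 xy.2

noncomputable def outputDist [Fintype X] (π : X → ℝ) (K : X → Y → ℝ) : Y → ℝ :=
  fun y => ∑ x, π x * K x y

variable {π : X → ℝ} {K : X → Y → ℝ}

lemma sum_joint_fst [Fintype Y] (hK : ∀ x, ∑ y, K x y = 1) (x : X) :
    ∑ y, joint π K (x, y) = π x := by
  simp [joint, ← Finset.mul_sum, hK x]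

variable [Fintype X] [Fintype Y]

lemma sum_joint (hK : ∀ x, ∑ y, K x y = 1) (hπ : ∑ x, π x = 1) :
    ∑ xy, joint π K xy = 1 := by
  rw [Fintype.sum_prod_type]
  simpa only [sum_joint_fst hK] using hπ

lemma sum_outputDist (hK : ∀ x, ∑ y, K x y = 1) (hπ : ∑ x, π x = 1) :
    ∑ y, outputDist π K y = 1 := by
  rw [← sum_joint hK hπ, Fintype.sum_prod_type, Finset.sum_comm]
  rfl

lemma mutualInfo_joint (hK : ∀ x, ∑ y, K x y = 1) :
    mutualInfo (joint π K) = entropy π + entropy (outputDist π K) - entropy (joint π K) := by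
  simp only [mutualInfo, sum_joint_fst hK]
  rfl

end Channel

section MixChannel

variable {X Y : Type*} (π : X → ℝ) (q : ℝ) (K₁ K₂ : X → Y → ℝ)

lemma sum_mixChannel [Fintype Y] (hK₁ : ∀ x, ∑ y, K₁ x y = 1) (hK₂ : ∀ x, ∑ y, K₂ x y = 1)
    (x : X) : ∑ ys, mixChannel q K₁ K₂ x ys = 1 := by
  rw [show mixChannel q K₁ K₂ x = stateMix q (K₁ x) (K₂ x) from rfl, sum_stateMix, hK₁, hK₂]
  ring

lemma outputDist_mixChannel [Fintype X] :
    outputDist π (mixChannel q K₁ K₂) = stateMix q (outputDist π K₁) (outputDist π K₂) := by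
  funext ⟨y, s⟩
  cases s <;>
    simp only [outputDist, mixChannel, stateMix, Finset.mul_sum, Bool.false_eq_true,
      if_true, if_false, mul_left_comm]

lemma joint_mixChannel :
    joint π (mixChannel q K₁ K₂) =
      stateMix q (joint π K₁) (joint π K₂) ∘ (Equiv.prodAssoc X Y Bool).symm := by
  funext ⟨x, y, s⟩
  cases s <;>
    simp only [joint, mixChannel, stateMix, Function.comp_apply, Equiv.prodAssoc_symm_apply,
      Bool.false_eq_true, if_true, if_false, mul_left_comm]

lemma mutualInfo_joint_mixChannel [Fintype X] [Fintype Y] (hK₁ : ∀ x, ∑ y, K₁ x y = 1)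
    (hK₂ : ∀ x, ∑ y, K₂ x y = 1) (hπ : ∑ x, π x = 1) :
    mutualInfo (joint π (mixChannel q K₁ K₂)) =
      q * mutualInfo (joint π K₁) + (1 - q) * mutualInfo (joint π K₂) := by
  rw [mutualInfo_joint (sum_mixChannel q K₁ K₂ hK₁ hK₂), mutualInfo_joint hK₁,
    mutualInfo_joint hK₂, outputDist_mixChannel, joint_mixChannel, entropy_comp_equiv,
    entropy_stateMix q (sum_outputDist hK₁ hπ) (sum_outputDist hK₂ hπ),
    entropy_stateMix q (sum_joint hK₁ hπ) (sum_joint hK₂ hπ)]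
  ring

end MixChannel

theorem mixChannel_moreCapable_general {X Y : Type*} [Fintype X] [Fintype Y]
    (K₁ K₂ : X → Y → ℝ) (hK₁ : IsChannel K₁) (hK₂ : IsChannel K₂)
    (hmc : ∀ π : X → ℝ, IsPMF π →
      mutualInfo (fun xy : X × Y => π xy.1 * K₂ xy.1 xy.2) ≤
        mutualInfo (fun xy : X × Y => π xy.1 * K₁ xy.1 xy.2))
    (p₁ p₂ : ℝ) (hle : p₂ ≤ p₁) :
    ∀ π : X → ℝ, IsPMF π →
      mutualInfo (fun xz : X × (Y × Bool) => π xz.1 * mixChannel p₂ K₁ K₂ xz.1 xz.2) ≤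
        mutualInfo (fun xz : X × (Y × Bool) => π xz.1 * mixChannel p₁ K₁ K₂ xz.1 xz.2) := by
  intro π hπ
  have hrows₁ : ∀ x, ∑ y, K₁ x y = 1 := fun x => (hK₁ x).2
  have hrows₂ : ∀ x, ∑ y, K₂ x y = 1 := fun x => (hK₂ x).2
  have hslope : 0 ≤ (p₁ - p₂) * (mutualInfo (joint π K₁) - mutualInfo (joint π K₂)) :=
    mul_nonneg (sub_nonneg.2 hle) (sub_nonneg.2 (hmc π hπ))
  change mutualInfo (joint π (mixChannel p₂ K₁ K₂)) ≤ mutualInfo (joint π (mixChannel p₁ K₁ K₂))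
  rw [mutualInfo_joint_mixChannel π p₁ K₁ K₂ hrows₁ hrows₂ hπ.2,
    mutualInfo_joint_mixChannel π p₂ K₁ K₂ hrows₁ hrows₂ hπ.2]
  linear_combination hslope

/-- Theorem 3(iii): if the broadcast channel with components `K₁, K₂` is more capable
(receiver 1 more capable than receiver 2), then for `1 ≥ p₁ ≥ p₂ ≥ 0` the broadcast channel
with two channel state components known at the receivers is more capable. -/
theorem mixChannel_moreCapable {X Y : Type*} [Fintype X] [Fintype Y] [Nonempty X] [Nonempty Y]
    (K₁ K₂ : X → Y → ℝ) (hK₁ : IsChannel K₁) (hK₂ : IsChannel K₂)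
    (hmc : ∀ π : X → ℝ, IsPMF π →
      mutualInfo (fun xy : X × Y => π xy.1 * K₂ xy.1 xy.2) ≤
        mutualInfo (fun xy : X × Y => π xy.1 * K₁ xy.1 xy.2))
    (p₁ p₂ : ℝ) (hp₂ : 0 ≤ p₂) (hle : p₂ ≤ p₁) (hp₁ : p₁ ≤ 1) :
    ∀ π : X → ℝ, IsPMF π →
      mutualInfo (fun xz : X × (Y × Bool) => π xz.1 * mixChannel p₂ K₁ K₂ xz.1 xz.2) ≤
        mutualInfo (fun xz : X × (Y × Bool) => π xz.1 * mixChannel p₁ K₁ K₂ xz.1 xz.2) :=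
  mixChannel_moreCapable_general K₁ K₂ hK₁ hK₂ hmc p₁ p₂ hle
end

section
/- Let U and X be nonempty finite types, k ≥ 1, ε : Fin k → [0,1], and let w and w' be pmfs on Fin k with ∑_i w i · (1 − ε i) ≥ ∑_i w' i · (1 − ε i). For a pmf v on Fin k and a joint pmf p on U × X, let r_v be the joint pmf on U × (Option X × Fin k) defined by r_v(u, (some x, i)) = v i · (1 − ε i) · p(u,x) and r_v(u, (none, i)) = v i · ε i · (∑_x p(u,x)). Then for every joint pmf p on U × X, I(U; Option X × Fin k)_{r_w} ≥ I(U; Option X × Fin k)_{r_{w'}}. -/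
/-- The joint pmf of `(U, (Y, S))` for a receiver of the erasure broadcast channel with `k`
channel state components: state `i` has probability `v i`, and given state `i` the input is
erased with probability `ε i` and otherwise passed through. -/
noncomputable def erasureJoint {U X : Type*} [Fintype X] {k : ℕ}
    (v : Fin k → ℝ) (ε : Fin k → ℝ) (p : U × X → ℝ) :
    U × (Option X × Fin k) → ℝ :=
  fun uz => match uz.2.1 with
    | some x => v uz.2.2 * (1 - ε uz.2.2) * p (uz.1, x)
    | none => v uz.2.2 * ε uz.2.2 * ∑ x, p (uz.1, x)

/-!
Given the state `i`, the receiver either sees `X` (probability `1 - ε i`) or only learns that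
it was erased, which carries no information about `U`. Since the state is independent of
`(U, X)`, the entropies of the output split into a state part and a part scaled by the
mixture capacity `C = ∑ i, v i (1 - ε i)`, and `I(U; Y, S) = C · I(U; X)`. Mutual information
is nonnegative by Gibbs' inequality, so `I(U; Y, S)` is monotone in `C`.
-/

open Real Finset

section Entropy

variable {ι α A B : Type*} [Fintype ι] [Fintype α] [Fintype A] [Fintype B]

lemma sum_sum_negMulLog_mul (c : ι → ℝ) (q : α → ℝ) :
    ∑ i, ∑ a, negMulLog (c i * q a) = (∑ a, q a) * entropy c + (∑ i, c i) * entropy q := by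
  simp only [entropy, negMulLog_mul, sum_add_distrib, ← mul_sum, ← sum_mul]

lemma sub_le_mul_log_div {a b : ℝ} (ha : 0 ≤ a) (hb : 0 < b) : a - b ≤ a * log (a / b) := by
  have h := mul_le_mul_of_nonneg_left (self_sub_one_le_mul_log (div_nonneg ha hb.le)) hb.le
  rwa [mul_sub, mul_one, mul_div_cancel₀ _ hb.ne', ← mul_assoc, mul_div_cancel₀ _ hb.ne'] at h

/-- Gibbs' inequality. -/
lemma sum_mul_log_div_nonneg {p q : ι → ℝ} (hp : ∀ i, 0 ≤ p i) (hq : ∀ i, 0 ≤ q i)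
    (hpq : ∀ i, q i = 0 → p i = 0) (hsum : ∑ i, q i ≤ ∑ i, p i) :
    0 ≤ ∑ i, p i * log (p i / q i) := by
  calc (0 : ℝ) ≤ ∑ i, (p i - q i) := by rw [sum_sub_distrib]; linarith
    _ ≤ ∑ i, p i * log (p i / q i) := by
      refine sum_le_sum fun i _ => ?_
      rcases (hq i).eq_or_lt with h | h
      · simp [← h, hpq i h.symm]
      · exact sub_le_mul_log_div (hp i) h

lemma entropy_marginal_fst (r : A × B → ℝ) :
    entropy (fun a => ∑ b, r (a, b)) = -∑ ab, r ab * log (∑ b, r (ab.1, b)) := by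
  simp only [entropy, negMulLog, neg_mul, sum_neg_distrib, Fintype.sum_prod_type, ← sum_mul]

lemma entropy_marginal_snd (r : A × B → ℝ) :
    entropy (fun b => ∑ a, r (a, b)) = -∑ ab, r ab * log (∑ a, r (a, ab.2)) := by
  rw [Fintype.sum_prod_type, sum_comm]
  simp only [entropy, negMulLog, neg_mul, sum_neg_distrib, ← sum_mul]

lemma mutualInfo_eq_sum_mul_log_div {r : A × B → ℝ} (hr : ∀ ab, 0 ≤ r ab) :
    mutualInfo r = ∑ ab, r ab * log (r ab / ((∑ b, r (ab.1, b)) * ∑ a, r (a, ab.2))) := by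
  rw [mutualInfo, entropy_marginal_fst, entropy_marginal_snd, entropy, ← sub_eq_zero,
    ← sum_neg_distrib, ← sum_neg_distrib, ← sum_add_distrib, ← sum_sub_distrib, ← sum_sub_distrib]
  refine sum_eq_zero fun ab _ => ?_
  rcases (hr ab).eq_or_lt with h | h
  · simp [← h]
  have hfst : 0 < ∑ b, r (ab.1, b) :=
    h.trans_le (single_le_sum (fun b _ => hr (ab.1, b)) (mem_univ ab.2))
  have hsnd : 0 < ∑ a, r (a, ab.2) :=
    h.trans_le (single_le_sum (fun a _ => hr (a, ab.2)) (mem_univ ab.1))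
  rw [log_div h.ne' (mul_pos hfst hsnd).ne', log_mul hfst.ne' hsnd.ne', negMulLog]
  ring

lemma mutualInfo_nonneg {r : A × B → ℝ} (hr : IsPMF r) : 0 ≤ mutualInfo r := by
  obtain ⟨hr0, hr1⟩ := hr
  rw [mutualInfo_eq_sum_mul_log_div hr0]
  refine sum_mul_log_div_nonneg hr0 (fun ab => mul_nonneg (sum_nonneg fun b _ => hr0 _)
    (sum_nonneg fun a _ => hr0 _)) (fun ab h => ?_) ?_
  · rcases mul_eq_zero.1 h with h | h
    · exact (sum_eq_zero_iff_of_nonneg fun b _ => hr0 _).1 h ab.2 (mem_univ _)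
    · exact (sum_eq_zero_iff_of_nonneg fun a _ => hr0 _).1 h ab.1 (mem_univ _)
  · rw [Fintype.sum_prod_type]
    simp only [← mul_sum, ← sum_mul]
    rw [← Fintype.sum_prod_type_right, ← Fintype.sum_prod_type, hr1, mul_one]

end Entropy

section Erasure

variable {U X : Type*} [Fintype X] {k : ℕ} (v ε : Fin k → ℝ) (p : U × X → ℝ)

lemma sum_erasureJoint_snd (hv : ∑ i, v i = 1) (u : U) :
    ∑ z, erasureJoint v ε p (u, z) = ∑ x, p (u, x) := by
  simp only [Fintype.sum_prod_type, Fintype.sum_option, erasureJoint, ← sum_mul, ← mul_sum]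
  rw [← add_mul, ← sum_add_distrib]
  simp only [← mul_add, add_sub_cancel, mul_one, hv, one_mul]

lemma entropy_erasureJoint_marginal_snd [Fintype U] (hp : ∑ ux, p ux = 1) :
    entropy (fun z => ∑ u, erasureJoint v ε p (u, z)) =
      entropy (fun i => v i * ε i) + entropy (fun i => v i * (1 - ε i)) +
        (∑ i, v i * (1 - ε i)) * entropy (fun x => ∑ u, p (u, x)) := by
  have hsnd : ∑ x, ∑ u, p (u, x) = 1 := by rw [← Fintype.sum_prod_type_right, hp]
  have hfst : ∑ u, ∑ x, p (u, x) = 1 := by rw [← Fintype.sum_prod_type, hp]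
  conv_lhs => simp only [entropy, Fintype.sum_prod_type, Fintype.sum_option, erasureJoint,
    ← mul_sum, hfst, mul_one]
  rw [sum_comm, sum_sum_negMulLog_mul, hsnd, one_mul, add_assoc]
  rfl

lemma entropy_erasureJoint [Fintype U] (hp : ∑ ux, p ux = 1) :
    entropy (erasureJoint v ε p) =
      entropy (fun i => v i * ε i) + (∑ i, v i * ε i) * entropy (fun u => ∑ x, p (u, x)) +
        (entropy (fun i => v i * (1 - ε i)) + (∑ i, v i * (1 - ε i)) * entropy p) := by
  have hfst : ∑ u, ∑ x, p (u, x) = 1 := by rw [← Fintype.sum_prod_type, hp]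
  conv_lhs => simp only [entropy, Fintype.sum_prod_type, Fintype.sum_option, erasureJoint,
    sum_add_distrib]
  rw [sum_comm, sum_sum_negMulLog_mul, hfst, one_mul, ← Fintype.sum_prod_type
    (f := fun ux => ∑ i, negMulLog (v i * (1 - ε i) * p ux)), sum_comm, sum_sum_negMulLog_mul,
    hp, one_mul]

lemma mutualInfo_erasureJoint [Fintype U] (hv : ∑ i, v i = 1) (hp : ∑ ux, p ux = 1) :
    mutualInfo (erasureJoint v ε p) = (∑ i, v i * (1 - ε i)) * mutualInfo p := by
  have hstate : ∑ i, v i * ε i = 1 - ∑ i, v i * (1 - ε i) := by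
    simp only [mul_sub, mul_one, sum_sub_distrib, hv]; ring
  rw [mutualInfo, entropy_erasureJoint_marginal_snd v ε p hp, entropy_erasureJoint v ε p hp,
    hstate, mutualInfo]
  simp only [sum_erasureJoint_snd v ε p hv]
  ring

end Erasure

theorem erasure_lessNoisy_general {U X : Type*} [Fintype U] [Fintype X]
    {k : ℕ} (ε : Fin k → ℝ)
    (w w' : Fin k → ℝ) (hw : IsPMF w) (hw' : IsPMF w')
    (hcap : ∑ i, w' i * (1 - ε i) ≤ ∑ i, w i * (1 - ε i)) :
    ∀ p : U × X → ℝ, IsPMF p →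
      mutualInfo (erasureJoint w' ε p) ≤ mutualInfo (erasureJoint w ε p) := by
  intro p hp
  rw [mutualInfo_erasureJoint w' ε p hw'.2 hp.2, mutualInfo_erasureJoint w ε p hw.2 hp.2]
  exact mul_le_mul_of_nonneg_right hcap (mutualInfo_nonneg hp)

/-- The erasure broadcast channel with `k` state components, with state known at the
receivers, is always less noisy: the receiver with the larger mixture capacity
`∑ i, w i (1 − ε i)` is less noisy than the other. -/
theorem erasure_lessNoisy {U X : Type*} [Fintype U] [Fintype X] [Nonempty U] [Nonempty X]
    {k : ℕ} (hk : 1 ≤ k) (ε : Fin k → ℝ) (hε : ∀ i, ε i ∈ Set.Icc (0 : ℝ) 1)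
    (w w' : Fin k → ℝ) (hw : IsPMF w) (hw' : IsPMF w')
    (hcap : ∑ i, w' i * (1 - ε i) ≤ ∑ i, w i * (1 - ε i)) :
    ∀ p : U × X → ℝ, IsPMF p →
      mutualInfo (erasureJoint w' ε p) ≤ mutualInfo (erasureJoint w ε p) :=
  erasure_lessNoisy_general ε w w' hw hw' hcap
end

section
/- Let α : Fin 3 → [0,1] and p, q : Fin 3 → ℝ with p i ≥ 0, q i ≥ 0 for all i and ∑_i p i = ∑_i q i = 1. Define D : ℝ → ℝ by D(x) = ∑_i (p i − q i) · (binEntropy(x ⋆ α i) − binEntropy(α i)). Then the set {x ∈ (0,1) : deriv (deriv D) x = 0} either equals the whole open interval (0,1) or has at most two elements. -/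
/-- Binary convolution: `x ⋆ a = x(1−a) + a(1−x)`. -/
noncomputable def bconv (x a : ℝ) : ℝ := x * (1 - a) + a * (1 - x)

/-!
Put `t = x(1 - x)`, `cᵢ = pᵢ - qᵢ`, `bᵢ = (1 - 2αᵢ)²` and `uᵢ = αᵢ(1 - αᵢ)`. Since `x ⋆ a` is affine
in `x` with slope `1 - 2a`, `h''(y) = -1 / (y(1 - y))` and
`(x ⋆ a)(1 - x ⋆ a) = a(1 - a) + t(1 - 2a)²`, we get `D''(x) = -∑ᵢ cᵢbᵢ / (uᵢ + t bᵢ)`.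
Over a common denominator the numerator is quadratic in `t` with leading coefficient
`(∑ᵢ cᵢ) b₀b₁b₂ = 0`, hence affine in `t`: either it vanishes identically, or it has at most one
root `t₀`, and `x(1 - x) = t₀` has at most two solutions.
-/

open Real Set Topology

theorem deriv_deriv_fun_sum {𝕜 F ι : Type*} [NontriviallyNormedField 𝕜] [NormedAddCommGroup F]
    [NormedSpace 𝕜 F] {s : Finset ι} {f : ι → 𝕜 → F} {x : 𝕜}
    (hf : ∀ i ∈ s, ∀ᶠ y in 𝓝 x, DifferentiableAt 𝕜 (f i) y)
    (hf' : ∀ i ∈ s, DifferentiableAt 𝕜 (deriv (f i)) x) :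
    deriv (deriv fun y => ∑ i ∈ s, f i y) x = ∑ i ∈ s, deriv (deriv (f i)) x := by
  have hderiv : deriv (fun y => ∑ i ∈ s, f i y) =ᶠ[𝓝 x] fun y => ∑ i ∈ s, deriv (f i) y := by
    filter_upwards [(Filter.eventually_all_finset s).2 hf] with y hy using deriv_fun_sum hy
  rw [hderiv.deriv_eq, deriv_fun_sum hf']

theorem bconv_eq_add_mul (x a : ℝ) : bconv x a = a + (1 - 2 * a) * x := by
  unfold bconv; ring

theorem bconv_mul_one_sub_bconv (x a : ℝ) :
    bconv x a * (1 - bconv x a) = a * (1 - a) + x * (1 - x) * (1 - 2 * a) ^ 2 := by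
  unfold bconv; ring

theorem bconv_mem_Ioo {x a : ℝ} (hx : x ∈ Ioo 0 1) (ha : a ∈ Icc 0 1) : bconv x a ∈ Ioo 0 1 := by
  obtain ⟨hx0, hx1⟩ := hx
  obtain ⟨ha0, ha1⟩ := ha
  unfold bconv
  constructor <;> nlinarith [mul_pos hx0 (sub_pos.2 hx1), mul_nonneg ha0 (sub_nonneg.2 ha1),
    sq_nonneg (x - a), sq_nonneg (x + a - 1)]

theorem deriv_comp_bconv (f : ℝ → ℝ) (a : ℝ) :
    deriv (fun x => f (bconv x a)) = fun x => (1 - 2 * a) * deriv f (bconv x a) := by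
  funext x
  simp only [bconv_eq_add_mul]
  rw [deriv_comp_mul_left (1 - 2 * a) (fun y => f (a + y)) x, smul_eq_mul, deriv_comp_const_add]

theorem deriv_binEntropy_bconv (c a b : ℝ) :
    deriv (fun x => c * (binEntropy (bconv x a) - b)) =
      fun x => c * (1 - 2 * a) * deriv binEntropy (bconv x a) := by
  rw [deriv_const_mul_field']
  funext x
  rw [deriv_sub_const, deriv_comp_bconv, mul_assoc]

theorem deriv_deriv_binEntropy_bconv (c a b x : ℝ) :
    deriv (deriv fun x => c * (binEntropy (bconv x a) - b)) x =
      -(c * (1 - 2 * a) ^ 2 / (bconv x a * (1 - bconv x a))) := by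
  have hbin := deriv2_binEntropy (p := bconv x a)
  rw [deriv_binEntropy_bconv, deriv_const_mul_field', deriv_comp_bconv]
  simp only [Function.iterate_succ, Function.iterate_zero, Function.comp_apply, id] at hbin
  beta_reduce
  rw [hbin]
  ring

theorem differentiableAt_binEntropy_bconv {c a b x : ℝ} (h : bconv x a ∈ Ioo 0 1) :
    DifferentiableAt ℝ (fun x => c * (binEntropy (bconv x a) - b)) x := by
  have hbconv : DifferentiableAt ℝ (fun x => bconv x a) x := by unfold bconv; fun_prop
  have hent := (differentiableAt_binEntropy h.1.ne' h.2.ne).comp x hbconv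
  fun_prop

theorem differentiableAt_deriv_binEntropy_bconv {c a b x : ℝ} (h : bconv x a ∈ Ioo 0 1) :
    DifferentiableAt ℝ (deriv fun x => c * (binEntropy (bconv x a) - b)) x := by
  rw [deriv_binEntropy_bconv]
  simp only [deriv_binEntropy]
  have h0 : bconv x a ≠ 0 := h.1.ne'
  have h1 : 1 - bconv x a ≠ 0 := sub_ne_zero.2 h.2.ne'
  unfold bconv at *
  fun_prop (disch := assumption)

theorem deriv_deriv_sum_binEntropy_bconv {ι : Type*} (s : Finset ι) (c a b : ι → ℝ) {x : ℝ}
    (ha : ∀ i ∈ s, a i ∈ Icc 0 1) (hx : x ∈ Ioo 0 1) :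
    deriv (deriv fun x => ∑ i ∈ s, c i * (binEntropy (bconv x (a i)) - b i)) x =
      -∑ i ∈ s, c i * (1 - 2 * a i) ^ 2 / (a i * (1 - a i) + x * (1 - x) * (1 - 2 * a i) ^ 2) := by
  rw [deriv_deriv_fun_sum (f := fun i x => c i * (binEntropy (bconv x (a i)) - b i)),
    ← Finset.sum_neg_distrib]
  · refine Finset.sum_congr rfl fun i _ => ?_
    rw [deriv_deriv_binEntropy_bconv, bconv_mul_one_sub_bconv]
  · intro i hi
    filter_upwards [Ioo_mem_nhds hx.1 hx.2] with y hy
    exact differentiableAt_binEntropy_bconv (bconv_mem_Ioo hy (ha i hi))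
  · exact fun i hi => differentiableAt_deriv_binEntropy_bconv (bconv_mem_Ioo hx (ha i hi))

theorem exists_affine_iff_sum_div_eq_zero (c b u : Fin 3 → ℝ) (hc : ∑ i, c i = 0) :
    ∃ B C : ℝ, ∀ t, (∀ i, u i + t * b i ≠ 0) →
      (∑ i, c i * b i / (u i + t * b i) = 0 ↔ B * t + C = 0) := by
  refine ⟨c 0 * b 0 * (u 1 * b 2 + u 2 * b 1) + c 1 * b 1 * (u 0 * b 2 + u 2 * b 0)
      + c 2 * b 2 * (u 0 * b 1 + u 1 * b 0),
    c 0 * b 0 * u 1 * u 2 + c 1 * b 1 * u 0 * u 2 + c 2 * b 2 * u 0 * u 1, fun t ht => ?_⟩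
  rw [Fin.sum_univ_three] at hc ⊢
  rw [div_add_div _ _ (ht 0) (ht 1), div_add_div _ _ (mul_ne_zero (ht 0) (ht 1)) (ht 2),
    div_eq_zero_iff, or_iff_left (mul_ne_zero (mul_ne_zero (ht 0) (ht 1)) (ht 2))]
  constructor <;> intro h
  · linear_combination h - t ^ 2 * b 0 * b 1 * b 2 * hc
  · linear_combination h + t ^ 2 * b 0 * b 1 * b 2 * hc

theorem exists_pair_of_affine_mul_one_sub_eq_zero {B C : ℝ} (h : ¬(B = 0 ∧ C = 0)) :
    ∃ a b : ℝ, ∀ x, B * (x * (1 - x)) + C = 0 → x = a ∨ x = b := by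
  by_cases hB : B = 0
  · refine ⟨0, 0, fun x hx => absurd ?_ h⟩
    simp only [hB, zero_mul, zero_add] at hx
    exact ⟨hB, hx⟩
  · refine ⟨1 / 2 + √(1 / 4 + C / B), 1 / 2 - √(1 / 4 + C / B), fun x hx => ?_⟩
    have hCB : C / B = -(x * (1 - x)) := by
      rw [div_eq_iff hB]
      linarith
    have hsq : 1 / 4 + C / B = (x - 1 / 2) ^ 2 := by
      rw [hCB]
      ring
    rw [hsq, sqrt_sq_eq_abs]
    rcases abs_choice (x - 1 / 2) with habs | habs
    · left; linarith
    · right; linarith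

theorem bsc_three_second_deriv_zeros_general (α : Fin 3 → ℝ) (hα : ∀ i, α i ∈ Set.Icc (0 : ℝ) 1)
    (p q : Fin 3 → ℝ)
    (hp1 : ∑ i, p i = 1) (hq1 : ∑ i, q i = 1)
    (D : ℝ → ℝ)
    (hD : D = fun x => ∑ i, (p i - q i) *
      (Real.binEntropy (bconv x (α i)) - Real.binEntropy (α i))) :
    {x | x ∈ Set.Ioo (0 : ℝ) 1 ∧ deriv (deriv D) x = 0} = Set.Ioo (0 : ℝ) 1 ∨
      ∃ a b : ℝ, {x | x ∈ Set.Ioo (0 : ℝ) 1 ∧ deriv (deriv D) x = 0} ⊆ {a, b} := by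
  obtain ⟨B, C, hBC⟩ := exists_affine_iff_sum_div_eq_zero (fun i => p i - q i)
    (fun i => (1 - 2 * α i) ^ 2) (fun i => α i * (1 - α i))
    (by rw [Finset.sum_sub_distrib, hp1, hq1, sub_self])
  have hzero : ∀ x ∈ Ioo (0 : ℝ) 1, deriv (deriv D) x = 0 ↔ B * (x * (1 - x)) + C = 0 := by
    intro x hx
    rw [hD, deriv_deriv_sum_binEntropy_bconv _ _ _ _ (fun i _ => hα i) hx, neg_eq_zero]
    refine hBC _ fun i => ?_
    have hy := bconv_mem_Ioo hx (hα i)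
    convert (mul_pos hy.1 (sub_pos.2 hy.2)).ne' using 1
    rw [bconv_mul_one_sub_bconv]
  by_cases hBC0 : B = 0 ∧ C = 0
  · left
    exact Set.ext fun x => ⟨And.left, fun hx => ⟨hx, (hzero x hx).2 (by simp [hBC0])⟩⟩
  · right
    obtain ⟨a, b, hab⟩ := exists_pair_of_affine_mul_one_sub_eq_zero hBC0
    exact ⟨a, b, fun x ⟨hx, h0⟩ => hab x ((hzero x hx).1 h0)⟩

/-- Root-counting claim from the proof of Theorem 5: the zero set of `D''` in `(0,1)` is
either all of `(0,1)` or has at most two elements. -/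
theorem bsc_three_second_deriv_zeros (α : Fin 3 → ℝ) (hα : ∀ i, α i ∈ Set.Icc (0 : ℝ) 1)
    (p q : Fin 3 → ℝ) (hp : ∀ i, 0 ≤ p i) (hq : ∀ i, 0 ≤ q i)
    (hp1 : ∑ i, p i = 1) (hq1 : ∑ i, q i = 1)
    (D : ℝ → ℝ)
    (hD : D = fun x => ∑ i, (p i - q i) *
      (Real.binEntropy (bconv x (α i)) - Real.binEntropy (α i))) :
    {x | x ∈ Set.Ioo (0 : ℝ) 1 ∧ deriv (deriv D) x = 0} = Set.Ioo (0 : ℝ) 1 ∨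
      ∃ a b : ℝ, {x | x ∈ Set.Ioo (0 : ℝ) 1 ∧ deriv (deriv D) x = 0} ⊆ {a, b} :=
  bsc_three_second_deriv_zeros_general α hα p q hp1 hq1 D hD
end
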